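/- Let G = B wr X with B, X abelian, X torsion-free, H ≤ G of finite index m, f : H → G a simple virtual endomorphism, and A the base group. Set A_0 = A ∩ H and L = f(A_0) ∩ A. If L is trivial, then B^m = 1 (B has exponent dividing m). -/

import Mathlib

def shiftEquiv {B X : Type*} [AddCommGroup B] [AddCommGroup X] (x : X) :
    (X →₀ B) ≃+ (X →₀ B) := Finsupp.domCongr (Equiv.addRight x)

noncomputable def shiftHom (B X : Type*) [AddCommGroup B] [AddCommGroup X] :
    Multiplicative X →* Multiplicative (AddAut (X →₀ B)) :=
  MonoidHom.mk' (fun x => Multiplicative.ofAdd (shiftEquiv x.toAdd)) (by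
    intro a b
    apply Multiplicative.toAdd.injective
    apply AddEquiv.ext
    intro f
    ext y
    simp [shiftEquiv, Finsupp.domCongr, Equiv.Perm.mul_def, sub_eq_add_neg]
    congr 1
    abel)

noncomputable def wreathAct (B X : Type*) [AddCommGroup B] [AddCommGroup X] :
    Multiplicative X →* MulAut (Multiplicative (X →₀ B)) :=
  { toFun := fun x => AddEquiv.toMultiplicative (shiftHom B X x).toAdd
    map_one' := by ext f; simp
    map_mul' := by intro a b; ext f; simp }

def AddMonoid.IsTorsionFree (G : Type*) [AddMonoid G] : Prop :=
  ∀ g : G, g ≠ 0 → ¬IsOfFinAddOrder g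

abbrev Wreath (B X : Type*) [AddCommGroup B] [AddCommGroup X] :=
  SemidirectProduct (Multiplicative (X →₀ B)) (Multiplicative X) (wreathAct B X)

/-!
Let `m = [G : H]`, `A` the base group and `π : G → X` the projection. As `A` is normal and
abelian, `a ^ m ∈ H` for `a ∈ A`; as `X` is abelian, `π H ⊇ mX`. Every commutator of `H` lies in
`A ∩ H` and `f` sends it into `A` again, hence into `L = 1`. So the normal subgroup
`⁅A ^ m, π⁻¹(π H)⁆` lies in `H` and is killed by `f`, and simplicity makes it trivial. For
`x ≠ 0`, commuting `(b • δ₀) ^ m` with the shift by `m • x ≠ 0` (`X` is torsion-free) then gives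
`m • b = 0`. If `X = 0`, then `G = A`, `f = 1`, so `H = 1` and `m = |G|`.
-/

open Subgroup SemidirectProduct Multiplicative Finsupp
open scoped commutatorElement

namespace Subgroup

variable {G : Type*} [Group G]

theorem relIndex_sup_of_normal_left (H N : Subgroup G) [N.Normal] :
    H.relIndex (N ⊔ H) = H.relIndex N := by
  refine (Nat.card_congr (Equiv.ofBijective _
    ⟨(quotientSubgroupOfEmbeddingOfLE H (le_sup_left : N ≤ N ⊔ H)).injective, ?_⟩)).symm
  intro q
  induction q using QuotientGroup.induction_on with | H g =>
  obtain ⟨g, hg⟩ := g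
  obtain ⟨n, hn, h, hh, rfl⟩ := mem_sup_of_normal_left.mp hg
  refine ⟨QuotientGroup.mk ⟨n, hn⟩, ?_⟩
  rw [quotientSubgroupOfEmbeddingOfLE_apply_mk, QuotientGroup.eq]
  simpa [mem_subgroupOf] using hh

theorem relIndex_dvd_index_of_normal_right (H N : Subgroup G) [N.Normal] :
    H.relIndex N ∣ H.index :=
  relIndex_sup_of_normal_left H N ▸ relIndex_dvd_index_of_le le_sup_right

theorem pow_mem_of_index_dvd {C : Type*} [CommGroup C] (K : Subgroup C) {n : ℕ}
    (hn : K.index ∣ n) (g : C) : g ^ n ∈ K := by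
  obtain ⟨k, rfl⟩ := hn
  rw [pow_mul]
  exact pow_mem (K.pow_index_mem g) k

theorem map_pow_index_mem {C : Type*} [CommGroup C] (H : Subgroup G) (φ : C →* G)
    [φ.range.Normal] (c : C) : φ (c ^ H.index) ∈ H :=
  pow_mem_of_index_dvd (H.comap φ)
    (by rw [index_comap]; exact relIndex_dvd_index_of_normal_right H _) c

end Subgroup

def IsSimpleVirtualEndomorphism {G : Type*} [Group G] {H : Subgroup G} (f : H →* G) : Prop :=
  ∀ K : Subgroup G, K.Normal → ∀ hK : K ≤ H, (∀ k (hk : k ∈ K), f ⟨k, hK hk⟩ ∈ K) → K = ⊥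

section VirtualEndomorphism

variable {G Q : Type*} [Group G] [CommGroup Q] {H : Subgroup G} {f : H →* G}

theorem IsSimpleVirtualEndomorphism.eq_bot_of_le_map_ker (hf : IsSimpleVirtualEndomorphism f)
    {K : Subgroup G} [K.Normal] (hK : K ≤ f.ker.map H.subtype) : K = ⊥ :=
  hf K ‹_› (hK.trans (map_subtype_le _)) fun k hk => by
    obtain ⟨k', hk', rfl⟩ := hK hk
    exact (show f k' = 1 from hk') ▸ one_mem K

theorem eq_one_of_map_ker_inf_ker_eq_bot (π : G →* Q)
    (hL : (π.ker.comap H.subtype).map f ⊓ π.ker = ⊥) {a : H} (ha : π a = 1)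
    (hfa : π (f a) = 1) : f a = 1 :=
  mem_bot.mp (hL ▸ ⟨mem_map_of_mem f ha, hfa⟩)

theorem map_commutatorElement_eq_one (π : G →* Q)
    (hL : (π.ker.comap H.subtype).map f ⊓ π.ker = ⊥) (a h : H) : f ⁅a, h⁆ = 1 :=
  have hab : ∀ φ : H →* Q, φ ⁅a, h⁆ = 1 := fun φ => by
    rw [map_commutatorElement, commutatorElement_eq_one_iff_commute]
    exact .all _ _
  eq_one_of_map_ker_inf_ker_eq_bot π hL (hab (π.comp H.subtype)) (hab (π.comp f))

end VirtualEndomorphism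

namespace Wreath

variable {B X : Type*} [AddCommGroup B] [AddCommGroup X]

theorem conj_inl (g : Wreath B X) (c : Multiplicative (X →₀ B)) :
    g * inl c * g⁻¹ = inl (wreathAct B X g.right c) := by
  ext <;> simp [mul_assoc]

theorem commutatorElement_inl (c : Multiplicative (X →₀ B)) (g : Wreath B X) :
    ⁅(inl c : Wreath B X), g⁆ = inl (c * (wreathAct B X g.right c)⁻¹) := by
  rw [commutatorElement_def, mul_assoc, mul_assoc, ← mul_assoc g, ← map_inv, conj_inl,
    ← map_mul, map_inv]

theorem wreathAct_single (t : X) (y : X) (b : B) :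
    wreathAct B X (ofAdd t) (ofAdd (single y b)) = ofAdd (single (y + t) b) := by
  simp [wreathAct, shiftHom, shiftEquiv]

theorem eq_zero_of_commutatorElement_single_eq_one {x : X} (hx : x ≠ 0) {b : B}
    (h : ⁅(inl (ofAdd (single 0 b)) : Wreath B X), (inr (ofAdd x) : Wreath B X)⁆ = 1) :
    b = 0 := by
  rw [commutatorElement_inl, map_eq_one_iff _ inl_injective, mul_inv_eq_one, right_inr,
    wreathAct_single, zero_add, Equiv.apply_eq_iff_eq, single_eq_single_iff] at h
  exact h.elim (fun h => absurd h.1 hx.symm) (·.1)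

instance : (inl : Multiplicative (X →₀ B) →* Wreath B X).range.Normal := by
  rw [range_inl_eq_ker_rightHom]
  infer_instance

noncomputable def basePow (m : ℕ) : Subgroup (Wreath B X) :=
  ((inl : Multiplicative (X →₀ B) →* Wreath B X).comp (powMonoidHom m)).range

instance (m : ℕ) : (basePow m : Subgroup (Wreath B X)).Normal :=
  ⟨by rintro _ ⟨c, rfl⟩ g; exact ⟨wreathAct B X g.right c, by
    simp only [MonoidHom.comp_apply, powMonoidHom_apply, conj_inl, map_pow (wreathAct B X _)]⟩⟩

theorem commutator_basePow_le_map_ker {H : Subgroup (Wreath B X)} {f : H →* Wreath B X}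
    (hL : (rightHom.ker.comap H.subtype).map f ⊓ rightHom.ker = ⊥) :
    ⁅(basePow H.index : Subgroup (Wreath B X)), (H.map rightHom).comap rightHom⁆ ≤
      f.ker.map H.subtype := by
  rw [commutator_le]
  rintro _ ⟨c, rfl⟩ q ⟨h, hh, hq⟩
  have hc : inl (c ^ H.index) ∈ H := H.map_pow_index_mem inl c
  refine ⟨⁅⟨_, hc⟩, ⟨h, hh⟩⁆, map_commutatorElement_eq_one rightHom hL _ _, ?_⟩
  rw [map_commutatorElement, MonoidHom.comp_apply, powMonoidHom_apply]
  change ⁅inl (c ^ H.index), h⁆ = ⁅inl (c ^ H.index), q⁆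
  rw [commutatorElement_inl, commutatorElement_inl, ← rightHom_eq_right, hq]

theorem index_nsmul_eq_zero_of_subsingleton [Subsingleton X] {H : Subgroup (Wreath B X)}
    {f : H →* Wreath B X} (hf : IsSimpleVirtualEndomorphism f)
    (hL : (rightHom.ker.comap H.subtype).map f ⊓ rightHom.ker = ⊥) (b : B) :
    H.index • b = 0 := by
  have hG : ∀ g : Wreath B X, g = inl g.left := fun g => by
    ext <;> simp [Subsingleton.elim g.right 1]
  have : H.Normal := ⟨fun n hn g => by
    rwa [hG n, conj_inl, Subsingleton.elim g.right 1, map_one, MulAut.one_apply, ← hG n]⟩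
  have hH : H = ⊥ := hf.eq_bot_of_le_map_ker fun h hh =>
    ⟨⟨h, hh⟩, eq_one_of_map_ker_inf_ker_eq_bot rightHom hL (Subsingleton.elim _ _)
      (Subsingleton.elim _ _), rfl⟩
  have := pow_card_eq_one' (G := Wreath B X) (x := inl (ofAdd (single 0 b)))
  rw [hH, index_bot]
  rwa [← map_pow, map_eq_one_iff _ inl_injective, ← ofAdd_nsmul,
    ofAdd_eq_one, smul_single, single_eq_zero] at this

end Wreath

open Wreath in
theorem stmt12_general {B X : Type*} [AddCommGroup B] [AddCommGroup X]
    (hX : AddMonoid.IsTorsionFree X)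
    (H : Subgroup (Wreath B X)) (f : H →* Wreath B X)
    (hsimple : ∀ K : Subgroup (Wreath B X), K.Normal → ∀ hK : K ≤ H,
      (∀ k (hk : k ∈ K), f ⟨k, hK hk⟩ ∈ K) → K = ⊥)
    (hL : Subgroup.map f
        (((SemidirectProduct.inl : Multiplicative (X →₀ B) →* Wreath B X).range).comap H.subtype)
        ⊓ (SemidirectProduct.inl : Multiplicative (X →₀ B) →* Wreath B X).range = ⊥) :
    ∀ b : B, H.index • b = 0 := by
  rw [range_inl_eq_ker_rightHom] at hL
  intro b
  rcases subsingleton_or_nontrivial X with _ | _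
  · exact index_nsmul_eq_zero_of_subsingleton hsimple hL b
  obtain ⟨x, hx⟩ := exists_ne (0 : X)
  rcases eq_or_ne H.index 0 with hm | hm
  · simp [hm]
  have hmx : H.index • x ≠ 0 := fun h =>
    hX x hx (isOfFinAddOrder_iff_nsmul_eq_zero.mpr ⟨_, Nat.pos_of_ne_zero hm, h⟩)
  have hK := IsSimpleVirtualEndomorphism.eq_bot_of_le_map_ker hsimple
    (commutator_basePow_le_map_ker hL)
  have hx' : (inr (ofAdd x ^ H.index) : Wreath B X) ∈ (H.map rightHom).comap rightHom :=
    pow_mem_of_index_dvd _ (H.index_map_dvd rightHom_surjective) _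
  have hb : (inl (ofAdd (single 0 b) ^ H.index) : Wreath B X) ∈ basePow H.index :=
    ⟨ofAdd (single 0 b), rfl⟩
  have hcomm := commutator_mem_commutator hb hx'
  rw [hK, mem_bot] at hcomm
  refine eq_zero_of_commutatorElement_single_eq_one hmx ?_
  simpa only [← ofAdd_nsmul, smul_single] using hcomm

/-- `G = B wr X`, `X` torsion-free, `H ≤ G` of finite index `m`, `f` a
simple virtual endomorphism; `A` the base group, `A₀ = A ∩ H`, `L = f(A₀) ∩ A`.
If `L` is trivial then `B^m = 1` (B has exponent dividing m). -/
theorem stmt12 {B X : Type*} [AddCommGroup B] [AddCommGroup X]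
    (hX : AddMonoid.IsTorsionFree X)
    (H : Subgroup (Wreath B X)) [H.FiniteIndex] (f : H →* Wreath B X)
    (hsimple : ∀ K : Subgroup (Wreath B X), K.Normal → ∀ hK : K ≤ H,
      (∀ k (hk : k ∈ K), f ⟨k, hK hk⟩ ∈ K) → K = ⊥)
    (hL : Subgroup.map f
        (((SemidirectProduct.inl : Multiplicative (X →₀ B) →* Wreath B X).range).comap H.subtype)
        ⊓ (SemidirectProduct.inl : Multiplicative (X →₀ B) →* Wreath B X).range = ⊥) :
    ∀ b : B, H.index • b = 0 :=
  stmt12_general hX H f hsimple hL
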